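/- Let U_n = max{ k ≥ 0 : T_k ≤ n }. Then P-almost surely, for every t ≥ 0, U_{[nt]} / n converges to t / (1+m) as n → ∞. -/

import Mathlib

/-!
Read along the path instead of site by site, the double sum in `T_n` becomes
`T_n = n + Σ_{j<n} ξ^{(Y_j)}_{N_j(Y_j)}`, and `j ↦ (N_j(Y_j), Y_j)` is injective. For a fixed
path these are distinct members of an i.i.d. geometric family, so the strong law gives
`T_n / n → 1 + m`; as the walk is independent of the `ξ`'s, Fubini over the product of their
laws makes this hold almost surely. `U` inverts the strictly increasing `T`, so
`U_n / n → 1 / (1 + m)`, and substituting `[nt]` for `n` rescales the limit by `t`.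
-/

open MeasureTheory ProbabilityTheory Filter

noncomputable section

/-- The simple random walk `Y_n = η_1 + ⋯ + η_n`, with `Y_0 = 0`. -/
def walk {Ω : Type*} (η : ℕ → Ω → ℤ) (n : ℕ) (ω : Ω) : ℤ :=
  ∑ k ∈ Finset.range n, η (k + 1) ω

/-- The local time `N_n(y) = #{0 ≤ k ≤ n : Y_k = y}` of the walk. -/
def localTime {Ω : Type*} (η : ℕ → Ω → ℤ) (n : ℕ) (y : ℤ) (ω : Ω) : ℕ :=
  ((Finset.range (n + 1)).filter fun k => walk η k ω = y).card

/-- The random times `T_n = n + Σ_{y∈ℤ} Σ_{i=1}^{N_{n−1}(y)} ξ_i^{(y)}`, with `T_0 = 0`.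
Since `|Y_k| ≤ k ≤ n - 1`, the sum over `y ∈ ℤ` reduces to the sum over `y ∈ [-n, n]`. -/
def hitTime {Ω : Type*} (η : ℕ → Ω → ℤ) (ξ : ℕ → ℤ → Ω → ℕ) : ℕ → Ω → ℕ
  | 0, _ => 0
  | n + 1, ω => (n + 1) + ∑ y ∈ Finset.Icc (-(n + 1 : ℤ)) (n + 1),
      ∑ i ∈ Finset.Icc 1 (localTime η n y ω), ξ i y ω

/-- `U_n = max{k ≥ 0 : T_k ≤ n}` (well defined since `T_0 = 0` and `T` is increasing
with `T_k ≥ k`). -/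
def lastTime {Ω : Type*} (η : ℕ → Ω → ℤ) (ξ : ℕ → ℤ → Ω → ℕ) (n : ℕ) (ω : Ω) : ℕ :=
  sSup {k : ℕ | hitTime η ξ k ω ≤ n}

open Finset Topology

section Walk

variable {Ω : Type*} (η : ℕ → Ω → ℤ) (ξ : ℕ → ℤ → Ω → ℕ) (ω : Ω)

def visitIndex (j : ℕ) : ℕ × ℤ := (localTime η j (walk η j ω) ω, walk η j ω)

@[simp] lemma walk_zero : walk η 0 ω = 0 := by simp [walk]

lemma walk_succ (n : ℕ) : walk η (n + 1) ω = walk η n ω + η (n + 1) ω := by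
  simp [walk, sum_range_succ]

-- The same shape as `localTime_succ`, with an empty past.
lemma localTime_zero (y : ℤ) : localTime η 0 y ω = 0 + if walk η 0 ω = y then 1 else 0 := by
  simp only [localTime, zero_add, range_one, filter_singleton]
  split_ifs <;> simp

lemma localTime_succ (n : ℕ) (y : ℤ) :
    localTime η (n + 1) y ω = localTime η n y ω + if walk η (n + 1) ω = y then 1 else 0 := by
  rw [localTime, range_add_one, filter_insert]
  split_ifs <;> simp [localTime, card_insert_of_notMem]

lemma localTime_lt_localTime {j j' : ℕ} (hjj' : j < j') :
    localTime η j (walk η j' ω) ω < localTime η j' (walk η j' ω) ω := by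
  refine card_lt_card ⟨monotone_filter_left _ (range_subset_range.2 (by omega)), fun hsub => ?_⟩
  have := hsub (mem_filter.2 ⟨self_mem_range_succ j', rfl⟩)
  simp only [mem_filter, mem_range] at this
  omega

lemma visitIndex_injective : Function.Injective (visitIndex η ω) := by
  intro j j' h
  simp only [visitIndex, Prod.mk.injEq] at h
  obtain ⟨hN, hY⟩ := h
  rcases lt_trichotomy j j' with hlt | heq | hgt
  · have := localTime_lt_localTime η ω hlt
    rw [hY] at hN
    omega
  · exact heq
  · have := localTime_lt_localTime η ω hgt
    rw [← hY] at hN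
    omega

lemma visitIndex_succ (n : ℕ) :
    visitIndex η ω (n + 1) = (localTime η n (walk η (n + 1) ω) ω + 1, walk η (n + 1) ω) := by
  simp [visitIndex, localTime_succ]

lemma abs_walk_le (hη : ∀ k, |η k ω| ≤ 1) (n : ℕ) : |walk η n ω| ≤ n := by
  induction n with
  | zero => simp
  | succ n ih =>
    rw [walk_succ]
    push_cast
    linarith [abs_add_le (walk η n ω) (η (n + 1) ω), hη (n + 1)]

lemma sum_sum_Icc_add_ite {M : Type*} [AddCommMonoid M] {s : Finset ℤ} {w : ℤ} (hw : w ∈ s)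
    (g : ℤ → ℕ) (f : ℕ × ℤ → M) :
    ∑ y ∈ s, ∑ i ∈ Icc 1 (g y + if w = y then 1 else 0), f (i, y)
      = ∑ y ∈ s, ∑ i ∈ Icc 1 (g y), f (i, y) + f (g w + 1, w) := by
  have hsplit : ∀ y ∈ s, ∑ i ∈ Icc 1 (g y + if w = y then 1 else 0), f (i, y)
      = ∑ i ∈ Icc 1 (g y), f (i, y) + if w = y then f (g y + 1, y) else 0 := by
    intro y _
    split_ifs
    · exact sum_Icc_succ_top (by omega) _
    · simp
  rw [sum_congr rfl hsplit, sum_add_distrib, sum_ite_eq, if_pos hw]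

/-- The `i`-th visit of the walk to `y` happens at the step `j` with `visitIndex j = (i, y)`. -/
lemma sum_sum_localTime_eq_sum_visitIndex {M : Type*} [AddCommMonoid M] {s : Finset ℤ} (n : ℕ)
    (hs : ∀ k ≤ n, walk η k ω ∈ s) (f : ℕ × ℤ → M) :
    ∑ y ∈ s, ∑ i ∈ Icc 1 (localTime η n y ω), f (i, y)
      = ∑ j ∈ range (n + 1), f (visitIndex η ω j) := by
  induction n with
  | zero =>
    simp_rw [localTime_zero, sum_sum_Icc_add_ite (hs 0 le_rfl)]
    simp [visitIndex, localTime_zero]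
  | succ n ih =>
    simp_rw [localTime_succ]
    rw [sum_sum_Icc_add_ite (hs (n + 1) le_rfl), ih fun k hk => hs k (by omega),
      sum_range_succ _ (n + 1), visitIndex_succ]

lemma hitTime_eq_add_sum_visitIndex (hη : ∀ k, |η k ω| ≤ 1) (n : ℕ) :
    hitTime η ξ n ω = n + ∑ j ∈ range n, ξ (visitIndex η ω j).1 (visitIndex η ω j).2 ω := by
  cases n with
  | zero => simp [hitTime]
  | succ n =>
    rw [hitTime, sum_sum_localTime_eq_sum_visitIndex η ω n ?_ fun q => ξ q.1 q.2 ω]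
    intro k hk
    have := abs_le.1 (abs_walk_le η ω hη k)
    rw [mem_Icc]
    constructor <;> omega

lemma hitTime_strictMono (hη : ∀ k, |η k ω| ≤ 1) : StrictMono fun n => hitTime η ξ n ω :=
  strictMono_nat_of_lt_succ fun n => by
    simp only [hitTime_eq_add_sum_visitIndex η ξ ω hη, sum_range_succ]
    omega

end Walk

lemma tendsto_sSup_le_div {T : ℕ → ℕ} (hT : StrictMono T) {c : ℝ} (hc : c ≠ 0)
    (h : Tendsto (fun n => (T n : ℝ) / n) atTop (𝓝 c)) :
    Tendsto (fun n => ((sSup {k | T k ≤ n} : ℕ) : ℝ) / n) atTop (𝓝 c⁻¹) := by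
  set U : ℕ → ℕ := fun n => sSup {k | T k ≤ n}
  have hbdd : ∀ n, BddAbove {k | T k ≤ n} := fun n => ⟨n, fun k hk => (hT.id_le k).trans hk⟩
  have hTU : ∀ᶠ n in atTop, T (U n) ≤ n :=
    eventually_ge_atTop (T 0) |>.mono fun n hn => Nat.sSup_mem ⟨0, hn⟩ (hbdd n)
  have hTU_succ : ∀ n, n < T (U n + 1) := fun n => by
    by_contra! hn
    exact (le_csSup (hbdd n) hn).not_gt (Nat.lt_succ_self _)
  have hU : Tendsto U atTop atTop :=
    tendsto_atTop.2 fun K => eventually_ge_atTop (T K) |>.mono fun n hn => le_csSup (hbdd n) hn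
  have hlower : Tendsto (fun n => (T (U n) : ℝ) / U n) atTop (𝓝 c) := h.comp hU
  -- `T (U n + 1) / U n = (T (U n + 1) / (U n + 1)) / (U n / (U n + 1))`
  have hupper : Tendsto (fun n => (T (U n + 1) : ℝ) / U n) atTop (𝓝 (c / 1)) := by
    refine ((h.comp (tendsto_add_atTop_nat 1 |>.comp hU)).div
      ((tendsto_natCast_div_add_atTop (1 : ℝ)).comp hU) one_ne_zero).congr fun n => ?_
    simp only [Pi.div_apply, Function.comp_apply, Nat.cast_add, Nat.cast_one]
    exact div_div_div_cancel_right₀ (by positivity) _ _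
  rw [div_one] at hupper
  have hnU : Tendsto (fun n : ℕ => (n : ℝ) / U n) atTop (𝓝 c) := by
    refine tendsto_of_tendsto_of_tendsto_of_le_of_le' hlower hupper ?_ ?_
    · filter_upwards [hTU] with n hn
      gcongr
    · filter_upwards [] with n
      gcongr
      exact_mod_cast (hTU_succ n).le
  simpa only [inv_div] using hnU.inv₀ hc

lemma tendsto_comp_floor_mul_div {u : ℕ → ℝ} {L t : ℝ}
    (h : Tendsto (fun n => u n / n) atTop (𝓝 L)) (ht : 0 ≤ t) :
    Tendsto (fun n : ℕ => u ⌊n * t⌋₊ / n) atTop (𝓝 (L * t)) := by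
  rcases ht.eq_or_lt with rfl | ht
  · simpa using tendsto_const_div_atTop_nhds_zero_nat (u 0)
  have hfloor : Tendsto (fun n : ℕ => ⌊n * t⌋₊) atTop atTop :=
    tendsto_nat_floor_atTop.comp (tendsto_natCast_atTop_atTop.atTop_mul_const ht)
  have hratio : Tendsto (fun n : ℕ => (⌊n * t⌋₊ : ℝ) / n) atTop (𝓝 t) := by
    simpa only [mul_comm t, Function.comp_def] using
      (tendsto_nat_floor_mul_div_atTop ht.le).comp tendsto_natCast_atTop_atTop
  refine ((h.comp hfloor).mul hratio).congr' ?_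
  filter_upwards [hfloor.eventually_ne_atTop 0] with n hn
  simp only [Function.comp_apply]
  field_simp

section Probability

variable {Ω : Type*} [MeasurableSpace Ω] {μ : Measure Ω}

lemma ae_eq_or_eq_of_measure_add_eq_one [IsProbabilityMeasure μ] {α : Type*} [MeasurableSpace α]
    [MeasurableSingletonClass α] {X : Ω → α} (hX : Measurable X) {a b : α} (hab : a ≠ b)
    (h : μ {ω | X ω = a} + μ {ω | X ω = b} = 1) : ∀ᵐ ω ∂μ, X ω = a ∨ X ω = b := by
  have ha : MeasurableSet {ω | X ω = a} := hX (measurableSet_singleton a)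
  have hb : MeasurableSet {ω | X ω = b} := hX (measurableSet_singleton b)
  have hdisj : Disjoint {ω | X ω = a} {ω | X ω = b} :=
    Set.disjoint_left.2 fun ω hωa hωb => hab (hωa.symm.trans hωb)
  refine (ae_iff_measure_eq ?_).2 ?_
  · exact (ha.union hb).nullMeasurableSet
  · rw [measure_univ, Set.ofPred_or, measure_union hdisj hb, h]

lemma map_eq_geometricMeasure {X : Ω → ℕ} (hX : Measurable X) {p : unitInterval} (hp : p ≠ 0)
    (h : ∀ k, μ {ω | X ω = k} = ENNReal.ofReal (p * (1 - p) ^ k)) :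
    μ.map X = geometricMeasure p :=
  Measure.ext_of_singleton fun k => by
    rw [Measure.map_apply hX (measurableSet_singleton k), geometricMeasure_singleton hp, mul_comm]
    exact h k

lemma unitInterval.norm_one_sub_lt_one {p : unitInterval} (hp : p ≠ 0) : ‖(1 - p : ℝ)‖ < 1 := by
  have : (0 : ℝ) < p := lt_of_le_of_ne p.2.1 (Subtype.coe_ne_coe.2 hp.symm)
  rw [Real.norm_of_nonneg (by linarith [p.2.2])]
  linarith

lemma integrable_natCast_geometricMeasure {p : unitInterval} (hp : p ≠ 0) :
    Integrable (fun k : ℕ => (k : ℝ)) (geometricMeasure p) := by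
  refine (integrable_geometricMeasure_iff hp).2 ?_
  simpa [mul_comm, mul_assoc, mul_left_comm] using (summable_pow_mul_geometric_of_norm_lt_one 1
    (unitInterval.norm_one_sub_lt_one hp)).mul_left (p : ℝ)

lemma integral_natCast_geometricMeasure {p : unitInterval} (hp : p ≠ 0) :
    ∫ k : ℕ, (k : ℝ) ∂geometricMeasure p = (1 - p) / p := by
  have : (p : ℝ) ≠ 0 := Subtype.coe_ne_coe.2 hp
  calc ∫ k : ℕ, (k : ℝ) ∂geometricMeasure p = p * ∑' k : ℕ, (k : ℝ) * (1 - p) ^ k := by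
        rw [integral_geometricMeasure hp, ← tsum_mul_left]
        congr with k
        rw [smul_eq_mul]
        ring
    _ = (1 - p) / p := by
        rw [tsum_coe_mul_geometric_of_norm_lt_one (unitInterval.norm_one_sub_lt_one hp),
          sub_sub_cancel]
        field_simp

lemma strong_law_ae_comp_injective {ι : Type*} {ζ : ι → Ω → ℕ} (hζ : ∀ i, Measurable (ζ i))
    (hindep : Pairwise fun i j => IndepFun (ζ i) (ζ j) μ) {ρ : Measure ℕ}
    (hlaw : ∀ i, μ.map (ζ i) = ρ) (hint : Integrable (fun k : ℕ => (k : ℝ)) ρ)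
    {σ : ℕ → ι} (hσ : Function.Injective σ) :
    ∀ᵐ ω ∂μ, Tendsto (fun n : ℕ => (∑ j ∈ range n, (ζ (σ j) ω : ℝ)) / n) atTop
      (𝓝 (∫ k : ℕ, (k : ℝ) ∂ρ)) := by
  have hident : ∀ j, IdentDistrib (ζ (σ j)) (ζ (σ 0)) μ μ := fun j =>
    ⟨(hζ _).aemeasurable, (hζ _).aemeasurable, by rw [hlaw, hlaw]⟩
  have hmean : ∫ k : ℕ, (k : ℝ) ∂ρ = ∫ ω, (ζ (σ 0) ω : ℝ) ∂μ := by
    rw [← hlaw (σ 0), integral_map (hζ _).aemeasurable measurable_from_nat.aestronglyMeasurable]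
  rw [hmean]
  refine strong_law_ae_real (fun j ω => (ζ (σ j) ω : ℝ)) ?_
    (fun i j hij => (hindep (hσ.ne hij)).comp measurable_from_nat measurable_from_nat)
    (fun j => (hident j).comp measurable_from_nat)
  rw [← hlaw (σ 0)] at hint
  exact (integrable_map_measure measurable_from_nat.aestronglyMeasurable
    (hζ _).aemeasurable).1 hint

lemma ProbabilityTheory.IndepFun.ae_mem_of_forall_ae_mem [IsFiniteMeasure μ] {α β : Type*}
    [MeasurableSpace α] [MeasurableSpace β] {X : Ω → α} {Z : Ω → β} (hX : Measurable X)
    (hZ : Measurable Z) (hXZ : IndepFun X Z μ) {E : Set (α × β)} (hE : MeasurableSet E)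
    (h : ∀ a, ∀ᵐ ω ∂μ, (a, Z ω) ∈ E) : ∀ᵐ ω ∂μ, (X ω, Z ω) ∈ E := by
  refine (ae_map_iff (p := (· ∈ E)) (hX.prodMk hZ).aemeasurable hE).1 ?_
  rw [(indepFun_iff_map_prod_eq_prod_map_map hX.aemeasurable hZ.aemeasurable).1 hXZ,
    Measure.ae_prod_mem_iff_ae_ae_mem hE]
  exact Eventually.of_forall fun a =>
    (ae_map_iff hZ.aemeasurable (measurable_prodMk_left hE)).2 (h a)

end Probability

section RandomWalk

variable {Ω : Type*} [MeasurableSpace Ω] {μ : Measure Ω} {η : ℕ → Ω → ℤ} {ξ : ℕ → ℤ → Ω → ℕ}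

lemma measurable_walk (hη : ∀ k, Measurable (η k)) (n : ℕ) : Measurable (walk η n) :=
  Finset.measurable_sum _ fun k _ => hη (k + 1)

lemma measurable_visitIndex (hη : ∀ k, Measurable (η k)) (j : ℕ) :
    Measurable fun ω => visitIndex η ω j := by
  refine Measurable.prodMk ?_ (measurable_walk hη j)
  have hcount : (fun ω => localTime η j (walk η j ω) ω)
      = fun ω => ∑ k ∈ range (j + 1), if walk η k ω = walk η j ω then 1 else 0 :=
    funext fun ω => card_filter _ _
  rw [hcount]
  exact Finset.measurable_sum _ fun k _ => Measurable.ite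
    (measurableSet_eq_fun (measurable_walk hη k) (measurable_walk hη j))
    measurable_const measurable_const

lemma ae_tendsto_sum_visitIndex_div [IsFiniteMeasure μ] (hη : ∀ k, Measurable (η k))
    (hξ : ∀ i y, Measurable (ξ i y))
    (hξ_indep : Pairwise fun iy jz : ℕ × ℤ => IndepFun (ξ iy.1 iy.2) (ξ jz.1 jz.2) μ)
    {ρ : Measure ℕ} (hlaw : ∀ i y, μ.map (ξ i y) = ρ)
    (hint : Integrable (fun k : ℕ => (k : ℝ)) ρ)
    (hξη_indep : IndepFun (fun ω k => η k ω) (fun ω (iy : ℕ × ℤ) => ξ iy.1 iy.2 ω) μ) :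
    ∀ᵐ ω ∂μ, Tendsto (fun n : ℕ =>
      (∑ j ∈ range n, (ξ (visitIndex η ω j).1 (visitIndex η ω j).2 ω : ℝ)) / n) atTop
        (𝓝 (∫ k : ℕ, (k : ℝ) ∂ρ)) := by
  let coord : ℕ → (ℕ → ℤ) → ℤ := fun k a => a k
  let E : Set ((ℕ → ℤ) × (ℕ × ℤ → ℕ)) := {x | Tendsto (fun n : ℕ =>
    (∑ j ∈ range n, (x.2 (visitIndex coord x.1 j) : ℝ)) / n) atTop (𝓝 (∫ k : ℕ, (k : ℝ) ∂ρ))}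
  have hE : MeasurableSet E := by
    refine measurableSet_tendsto_fun (fun n => Measurable.div_const ?_ _) measurable_const
    refine Finset.measurable_sum _ fun j _ => measurable_from_nat.comp ?_
    exact (measurable_from_prod_countable_left
      (f := fun q : (ℕ × ℤ → ℕ) × (ℕ × ℤ) => q.1 q.2) fun iy => measurable_pi_apply iy).comp
      (measurable_snd.prodMk ((measurable_visitIndex measurable_pi_apply j).comp measurable_fst))
  have hsec (a : ℕ → ℤ) : ∀ᵐ ω ∂μ, (a, fun iy : ℕ × ℤ => ξ iy.1 iy.2 ω) ∈ E :=
    (strong_law_ae_comp_injective (ζ := fun iy ω => ξ iy.1 iy.2 ω) (fun iy => hξ iy.1 iy.2)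
      hξ_indep (fun iy => hlaw iy.1 iy.2) hint (visitIndex_injective coord a) :)
  have hX : Measurable fun ω k => η k ω := measurable_pi_lambda _ hη
  have hZ : Measurable fun ω (iy : ℕ × ℤ) => ξ iy.1 iy.2 ω :=
    measurable_pi_lambda _ fun iy => hξ iy.1 iy.2
  have hc : ∀ ω j, visitIndex coord (fun k => η k ω) j = visitIndex η ω j := fun _ _ => rfl
  simpa only [E, Set.mem_ofPred_eq, hc] using hξη_indep.ae_mem_of_forall_ae_mem hX hZ hE hsec

end RandomWalk

theorem lastTime_div_tendsto_ae_general
    {Ω : Type*} [MeasureSpace Ω] [IsProbabilityMeasure (ℙ : Measure Ω)]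
    (p : ℝ) (hp0 : 0 < p) (hp1 : p < 1)
    (η : ℕ → Ω → ℤ) (ξ : ℕ → ℤ → Ω → ℕ)
    (hη_meas : ∀ k, Measurable (η k))
    (hη_one : ∀ k, ℙ {ω | η k ω = 1} = 1/2)
    (hη_negone : ∀ k, ℙ {ω | η k ω = -1} = 1/2)
    (hξ_meas : ∀ i y, Measurable (ξ i y))
    (hξ_indep : iIndepFun (fun iy : ℕ × ℤ => ξ iy.1 iy.2) ℙ)
    (hξ_geom : ∀ i y k, ℙ {ω | ξ i y ω = k} = ENNReal.ofReal (p * (1 - p) ^ k))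
    (hξη_indep : IndepFun (fun ω (k : ℕ) => η k ω) (fun ω (iy : ℕ × ℤ) => ξ iy.1 iy.2 ω) ℙ) :
    ∀ᵐ ω ∂(ℙ : Measure Ω), ∀ t : ℝ, 0 ≤ t →
      Tendsto (fun n : ℕ => (lastTime η ξ ⌊(n : ℝ) * t⌋₊ ω : ℝ) / n) atTop
        (nhds (t / (1 + (1 - p) / p))) := by
  set q : unitInterval := ⟨p, hp0.le, hp1.le⟩
  have hq : q ≠ 0 := fun h => hp0.ne' (congrArg Subtype.val h)
  have hstep : ∀ᵐ ω, ∀ k, |η k ω| ≤ 1 := ae_all_iff.2 fun k =>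
    (ae_eq_or_eq_of_measure_add_eq_one (a := 1) (b := -1) (hη_meas k) (by decide)
      (by rw [hη_one, hη_negone, ENNReal.add_halves])).mono fun ω h => by
        rcases h with h | h <;> simp [h]
  have havg := ae_tendsto_sum_visitIndex_div hη_meas hξ_meas (fun _ _ h => hξ_indep.indepFun h)
    (fun i y => map_eq_geometricMeasure (hξ_meas i y) hq (hξ_geom i y))
    (integrable_natCast_geometricMeasure hq) hξη_indep
  rw [integral_natCast_geometricMeasure hq] at havg
  filter_upwards [hstep, havg] with ω hstep havg t ht
  have hT : Tendsto (fun n : ℕ => (hitTime η ξ n ω : ℝ) / n) atTop (𝓝 (1 + (1 - p) / p)) := by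
    refine (tendsto_const_nhds.add havg).congr' ?_
    filter_upwards [eventually_ne_atTop 0] with n hn
    rw [hitTime_eq_add_sum_visitIndex η ξ ω hstep n]
    push_cast
    field_simp
  have hU := tendsto_sSup_le_div (hitTime_strictMono η ξ ω hstep) (by positivity) hT
  simpa only [inv_mul_eq_div, lastTime] using tendsto_comp_floor_mul_div hU ht

/-- `P`-almost surely, for every `t ≥ 0`, `U_{[nt]} / n → t / (1 + m)` as `n → ∞`,
where `m = (1-p)/p`. -/
theorem lastTime_div_tendsto_ae
    {Ω : Type*} [MeasureSpace Ω] [IsProbabilityMeasure (ℙ : Measure Ω)]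
    (p : ℝ) (hp0 : 0 < p) (hp1 : p < 1)
    (η : ℕ → Ω → ℤ) (ξ : ℕ → ℤ → Ω → ℕ)
    (hη_meas : ∀ k, Measurable (η k))
    (hη_indep : iIndepFun η ℙ)
    (hη_one : ∀ k, ℙ {ω | η k ω = 1} = 1/2)
    (hη_negone : ∀ k, ℙ {ω | η k ω = -1} = 1/2)
    (hξ_meas : ∀ i y, Measurable (ξ i y))
    (hξ_indep : iIndepFun (fun iy : ℕ × ℤ => ξ iy.1 iy.2) ℙ)
    (hξ_geom : ∀ i y k, ℙ {ω | ξ i y ω = k} = ENNReal.ofReal (p * (1 - p) ^ k))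
    (hξη_indep : IndepFun (fun ω (k : ℕ) => η k ω) (fun ω (iy : ℕ × ℤ) => ξ iy.1 iy.2 ω) ℙ) :
    ∀ᵐ ω ∂(ℙ : Measure Ω), ∀ t : ℝ, 0 ≤ t →
      Tendsto (fun n : ℕ => (lastTime η ξ ⌊(n : ℝ) * t⌋₊ ω : ℝ) / n) atTop
        (nhds (t / (1 + (1 - p) / p))) :=
  lastTime_div_tendsto_ae_general p hp0 hp1 η ξ hη_meas hη_one hη_negone hξ_meas hξ_indep hξ_geom
    hξη_indep
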